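/- arXiv:2010.02149 — 4 statements merged into one kernel-verified Lean document; each statement's English description precedes it below -/
import Mathlib

section
/- Let τ ⊆ ℕ be an infinite set. Then the set U_τ(T,E) of generalized harmonic functions f such that {ω_n(f) : n ∈ τ} is dense in L^0(∂T,E) is a dense G_δ subset of H(T,E) (with the topology on H(T,E) induced from the product topology on E^T). -/
open MeasureTheory Filter Topology

/-- A rooted tree with finite levels `T n`, a singleton root level, a parent map,
and at least two children for every vertex. -/
structure TreeData where
  T : ℕ → Type
  fint : ∀ n, Fintype (T n)
  rootSubsingleton : ∀ x y : T 0, x = y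
  rootNonempty : Nonempty (T 0)
  par : ∀ n, T (n + 1) → T n
  twoChildren : ∀ n (x : T n), 2 ≤ Nat.card {y : T (n + 1) // par n y = x}

instance (D : TreeData) (n : ℕ) : Fintype (D.T n) := D.fint n

noncomputable instance (D : TreeData) (n : ℕ) (x : D.T n) :
    Fintype {y : D.T (n + 1) // D.par n y = x} := by
  classical exact Subtype.fintype _

/-- The set of vertices of the tree. -/
def TreeData.Vert (D : TreeData) : Type := Σ n, D.T n

/-- The boundary `∂T` : infinite geodesics starting at the root. -/
def TreeData.Boundary (D : TreeData) : Type :=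
  {e : ∀ n, D.T n // ∀ n, D.par n (e (n + 1)) = e n}

/-- The boundary sector `B_x` of geodesics through `x`. -/
def TreeData.sector (D : TreeData) (n : ℕ) (x : D.T n) : Set D.Boundary :=
  {e | e.1 n = x}

/-- The σ-algebra `M_m` generated by the sectors at level `m`. -/
def TreeData.levelMS (D : TreeData) (m : ℕ) : MeasurableSpace D.Boundary :=
  MeasurableSpace.generateFrom {s | ∃ x : D.T m, s = D.sector m x}

/-- The σ-algebra `M` generated by all boundary sectors. -/
instance TreeData.boundaryMS (D : TreeData) : MeasurableSpace D.Boundary :=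
  MeasurableSpace.generateFrom {s | ∃ n, ∃ x : D.T n, s = D.sector n x}

/-- The probability `∏_{j<n} q(y_j, y_{j+1})` of the path from the root to a vertex. -/
def TreeData.pathProb (D : TreeData) (q : ∀ n, D.T (n + 1) → ℝ) :
    ∀ n, D.T n → ℝ
  | 0, _ => 1
  | n + 1, y => D.pathProb q n (D.par n y) * q n y

/-- `f : T → E` is generalized harmonic: `f x = ∑_{y ∈ S x} w x y • f y`. -/
def TreeData.Harmonic (D : TreeData) {𝔽 E : Type} [Field 𝔽] [AddCommGroup E]
    [Module 𝔽 E] (w : ∀ n, D.T (n + 1) → 𝔽) (f : D.Vert → E) : Prop :=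
  ∀ n (x : D.T n),
    f ⟨n, x⟩ = ∑ y : {y : D.T (n + 1) // D.par n y = x}, w n y.1 • f ⟨n + 1, y.1⟩

/-- The set `H(T,E)` of generalized harmonic functions. -/
def TreeData.harmonicSet (D : TreeData) {𝔽 : Type} (E : Type) [Field 𝔽] [AddCommGroup E]
    [Module 𝔽 E] (w : ∀ n, D.T (n + 1) → 𝔽) : Set (D.Vert → E) :=
  {f | D.Harmonic w f}

/-- `ω_n(f) : ∂T → E`. -/
def TreeData.omegaMap (D : TreeData) {E : Type} (f : D.Vert → E) (n : ℕ)
    (e : D.Boundary) : E := f ⟨n, e.1 n⟩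

/-- The pseudometric of convergence in probability associated to a distance `ρ`. -/
noncomputable def TreeData.dPgen (D : TreeData) (P : Measure D.Boundary) {α : Type}
    (ρ : α → α → ℝ) (h g : D.Boundary → α) : ℝ :=
  ∫ e, ρ (h e) (g e) / (1 + ρ (h e) (g e)) ∂P

/-- The metric `d_ℙ` of convergence in probability on `L⁰(∂T, E)`. -/
noncomputable def TreeData.dP (D : TreeData) (P : Measure D.Boundary) {E : Type}
    [MetricSpace E] (h g : D.Boundary → E) : ℝ :=
  D.dPgen P dist h g

/-- The translation invariant metric `d̃` on `E ^ ℕ` inducing the product topology. -/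
noncomputable def dTilde {E : Type} [MetricSpace E] (x y : ℕ → E) : ℝ :=
  ∑' n : ℕ, (1 / 2 : ℝ) ^ n * (dist (x n) (y n) / (1 + dist (x n) (y n)))

/-- Lower density of a set of natural numbers. -/
noncomputable def lowerDensity (A : Set ℕ) : ℝ :=
  Filter.liminf (fun N : ℕ => ((A ∩ Set.Iio N).ncard : ℝ) / N) Filter.atTop

/-- Upper density of a set of natural numbers. -/
noncomputable def upperDensity (A : Set ℕ) : ℝ :=
  Filter.limsup (fun N : ℕ => ((A ∩ Set.Iio N).ncard : ℝ) / N) Filter.atTop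

/-- `f ∈ U_τ(T,E)` : the family `(ω_n f)_{n ∈ τ}` is dense in `L⁰(∂T,E)`. -/
def TreeData.UnivOn (D : TreeData) (P : Measure D.Boundary) {E : Type}
    [MetricSpace E] [MeasurableSpace E] (τ : Set ℕ) (f : D.Vert → E) : Prop :=
  ∀ h : D.Boundary → E, Measurable h → ∀ ε > 0, ∃ n ∈ τ, D.dP P (D.omegaMap f n) h < ε

/-- `f ∈ U_FM(T,E)` : for every nonempty open subset `V` of `L⁰(∂T,E)` (equivalently,
every ball) the set `{n | ω_n f ∈ V}` has strictly positive lower density. -/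
def TreeData.FreqUniv (D : TreeData) (P : Measure D.Boundary) {E : Type}
    [MetricSpace E] [MeasurableSpace E] (f : D.Vert → E) : Prop :=
  ∀ h : D.Boundary → E, Measurable h → ∀ ε > 0,
    0 < lowerDensity {n | D.dP P (D.omegaMap f n) h < ε}

/-- `f ∈ U_FM^τ(T,E)` for `τ` enumerated by `ns`. -/
def TreeData.FreqUnivAlong (D : TreeData) (P : Measure D.Boundary) {E : Type}
    [MetricSpace E] [MeasurableSpace E] (ns : ℕ → ℕ) (f : D.Vert → E) : Prop :=
  ∀ h : D.Boundary → E, Measurable h → ∀ ε > 0,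
    0 < lowerDensity {k | D.dP P (D.omegaMap f (ns k)) h < ε}

/-- `f ∈ X(T,E)` : for every nonempty open subset `V` of `L⁰(∂T,E)` (equivalently,
every ball) the set `{n | ω_n f ∈ V}` has upper density `1`. -/
def TreeData.UpperUniv (D : TreeData) (P : Measure D.Boundary) {E : Type}
    [MetricSpace E] [MeasurableSpace E] (f : D.Vert → E) : Prop :=
  ∀ h : D.Boundary → E, Measurable h → ∀ ε > 0,
    upperDensity {n | D.dP P (D.omegaMap f n) h < ε} = 1

/-- `f ∈ U_FM(T, E^ℕ)` where `E^ℕ` carries the metric `d̃`. -/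
def TreeData.FreqUnivPi (D : TreeData) (P : Measure D.Boundary) {E : Type}
    [MetricSpace E] [MeasurableSpace E] (f : D.Vert → (ℕ → E)) : Prop :=
  ∀ h : D.Boundary → (ℕ → E), Measurable h → ∀ ε > 0,
    0 < lowerDensity {n | D.dPgen P dTilde (D.omegaMap f n) h < ε}

variable {𝔽 E : Type} [Field 𝔽] [TopologicalSpace 𝔽] [T2Space 𝔽]
  [TopologicalSpace.SeparableSpace 𝔽] [ContinuousAdd 𝔽] [ContinuousInv₀ 𝔽]
  [AddCommGroup E] [Module 𝔽 E] [MetricSpace E]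
  [TopologicalSpace.SeparableSpace E] [ContinuousAdd E] [ContinuousSMul 𝔽 E]
  [MeasurableSpace E] [BorelSpace E]

/-!
The set `U_τ` is the intersection, over countably many targets `φ` (functions of a single level
with values in a countable dense subset of `E`) and over `k : ℕ`, of the sets
`{f | ∃ n ∈ τ, d_ℙ(ω_n f, φ) < 1 / (k + 1)}`. These targets are dense in `L⁰(∂T, E)` because the
cylinder sets form a ring generating `M`, and the sets are open because `ω_n f` only depends on
the finitely many values of `f` on level `n`; hence `U_τ` is a `G_δ`.

For density, keep a harmonic `f` on the levels `≤ N`. On a level `n > N` one may prescribe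
arbitrary values everywhere except at one descendant of each vertex of level `N`, reached through
children of probability `q ≤ 1/2`: the harmonic equations are solved by adjusting the values
along these paths, which is possible since `w ≠ 0`, and the paths carry measure `≤ 2^(N-n)`.
So `ω_n f` approximates any target. Repeating this with ever larger `N` freezes more and more
levels, and the limit is a harmonic function in `U_τ`. This diagonal construction replaces
Baire's theorem, which does not apply since `E` need not be complete.
-/

open scoped ENNReal

lemma div_one_add_le_one {t : ℝ} (ht : 0 ≤ t) : t / (1 + t) ≤ 1 :=
  (div_le_one (by linarith)).2 (by linarith)

lemma div_one_add_le_self {t : ℝ} (ht : 0 ≤ t) : t / (1 + t) ≤ t :=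
  div_le_self ht (by linarith)

lemma div_one_add_le_add {a b c : ℝ} (ha : 0 ≤ a) (hb : 0 ≤ b) (hc : 0 ≤ c)
    (h : c ≤ a + b) : c / (1 + c) ≤ a / (1 + a) + b / (1 + b) := by
  calc c / (1 + c) ≤ (a + b) / (1 + (a + b)) := by
        rw [div_le_div_iff₀ (by linarith) (by linarith)]; nlinarith
    _ = a / (1 + (a + b)) + b / (1 + (a + b)) := add_div _ _ _
    _ ≤ a / (1 + a) + b / (1 + b) := by gcongr <;> linarith

lemma exists_eqOn_of_eqOn_succ {α β : Type*} (g : ℕ → α → β) {S : ℕ → Set α}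
    (hS : Monotone S) (hcover : ∀ a, ∃ s, a ∈ S s) (h : ∀ s, Set.EqOn (g (s + 1)) (g s) (S s)) :
    ∃ f : α → β, ∀ s, Set.EqOn f (g s) (S s) := by
  have hstable : ∀ s t, s ≤ t → Set.EqOn (g t) (g s) (S s) := fun s t hst => by
    induction t, hst using Nat.le_induction with
    | base => exact Set.eqOn_refl _ _
    | succ t hst ih => exact fun a ha => (h t (hS hst ha)).trans (ih ha)
  choose idx hidx using hcover
  refine ⟨fun a => g (idx a) a, fun s a ha => ?_⟩
  rcases le_total s (idx a) with hs | hs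
  · exact hstable s _ hs ha
  · exact (hstable _ s hs (hidx a)).symm

namespace TreeData

variable {D : TreeData}

instance (n : ℕ) : MeasurableSpace (D.T n) := ⊤

instance (n : ℕ) : DiscreteMeasurableSpace (D.T n) := ⟨fun _ => trivial⟩

lemma measurable_eval (n : ℕ) : Measurable fun e : D.Boundary => e.1 n :=
  measurable_to_countable' fun x => MeasurableSpace.measurableSet_generateFrom ⟨n, x, rfl⟩

lemma measurable_eval_comp {α : Type*} [MeasurableSpace α] {n : ℕ} (t : D.T n → α) :
    Measurable fun e : D.Boundary => t (e.1 n) :=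
  Measurable.of_discrete.comp (measurable_eval n)

lemma measurable_omegaMap {E : Type} [MeasurableSpace E] (f : D.Vert → E) (n : ℕ) :
    Measurable (D.omegaMap f n) :=
  measurable_eval_comp fun x => f ⟨n, x⟩

section DP

variable (P : Measure D.Boundary) [IsProbabilityMeasure P] {E : Type} [MetricSpace E]
  [MeasurableSpace E] [BorelSpace E] [TopologicalSpace.SeparableSpace E] {F G H : D.Boundary → E}

lemma integrable_dist_div_one_add_dist (hF : Measurable F) (hG : Measurable G) :
    Integrable (fun e => dist (F e) (G e) / (1 + dist (F e) (G e))) P := by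
  have hd := hF.dist hG
  refine (integrable_const (1 : ℝ)).mono' (hd.div (measurable_const.add hd)).aestronglyMeasurable
    (ae_of_all _ fun e => ?_)
  rw [Real.norm_of_nonneg (by positivity)]
  exact div_one_add_le_one dist_nonneg

lemma dP_triangle (hF : Measurable F) (hG : Measurable G) (hH : Measurable H) :
    D.dP P F H ≤ D.dP P F G + D.dP P G H := by
  unfold dP dPgen
  rw [← integral_add (integrable_dist_div_one_add_dist P hF hG)
    (integrable_dist_div_one_add_dist P hG hH)]
  exact integral_mono (integrable_dist_div_one_add_dist P hF hH)
    ((integrable_dist_div_one_add_dist P hF hG).add (integrable_dist_div_one_add_dist P hG hH))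
    fun e => div_one_add_le_add dist_nonneg dist_nonneg dist_nonneg (dist_triangle _ _ _)

lemma dP_le_of_forall_dist_le (hF : Measurable F) (hG : Measurable G) {δ : ℝ}
    (h : ∀ e, dist (F e) (G e) ≤ δ) : D.dP P F G ≤ δ := by
  calc D.dP P F G ≤ ∫ _, δ ∂P :=
        integral_mono (integrable_dist_div_one_add_dist P hF hG) (integrable_const δ) fun e =>
          (div_one_add_le_self dist_nonneg).trans (h e)
    _ = δ := by simp

lemma dP_le_measureReal_ne (hF : Measurable F) (hG : Measurable G) :
    D.dP P F G ≤ P.real {e | F e ≠ G e} := by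
  have hne : MeasurableSet {e | F e ≠ G e} := by
    simpa only [dist_pos] using measurableSet_lt (measurable_const (a := (0 : ℝ))) (hF.dist hG)
  rw [← integral_indicator_one hne]
  refine integral_mono (integrable_dist_div_one_add_dist P hF hG)
    ((integrable_const 1).indicator hne) fun e => ?_
  by_cases he : F e = G e
  · simp [he]
  · simpa [he] using div_one_add_le_one (dist_nonneg (x := F e) (y := G e))

end DP

def cylinders (D : TreeData) : Set (Set D.Boundary) :=
  {s | ∃ n, ∃ u : Set (D.T n), (fun e : D.Boundary => e.1 n) ⁻¹' u = s}

lemma exists_preimage_eval_eq {m n : ℕ} (hmn : m ≤ n) (u : Set (D.T m)) :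
    ∃ v : Set (D.T n),
      (fun e : D.Boundary => e.1 n) ⁻¹' v = (fun e : D.Boundary => e.1 m) ⁻¹' u := by
  induction n, hmn using Nat.le_induction with
  | base => exact ⟨u, rfl⟩
  | succ n _ ih =>
    obtain ⟨v, hv⟩ := ih
    refine ⟨D.par n ⁻¹' v, ?_⟩
    rw [← hv]
    ext e
    simp [e.2 n]

lemma exists_common_level {s t : Set D.Boundary} (hs : s ∈ D.cylinders) (ht : t ∈ D.cylinders) :
    ∃ n, ∃ u v : Set (D.T n), (fun e : D.Boundary => e.1 n) ⁻¹' u = s ∧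
      (fun e : D.Boundary => e.1 n) ⁻¹' v = t := by
  obtain ⟨m, u, rfl⟩ := hs
  obtain ⟨m', u', rfl⟩ := ht
  obtain ⟨v, hv⟩ := exists_preimage_eval_eq (D := D) (le_max_left m m') u
  obtain ⟨v', hv'⟩ := exists_preimage_eval_eq (D := D) (le_max_right m m') u'
  exact ⟨_, v, v', hv, hv'⟩

lemma isSetRing_cylinders : IsSetRing D.cylinders where
  empty_mem := ⟨0, ∅, rfl⟩
  union_mem s t hs ht := by
    obtain ⟨n, u, v, rfl, rfl⟩ := exists_common_level hs ht
    exact ⟨n, u ∪ v, rfl⟩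
  sdiff_mem s t hs ht := by
    obtain ⟨n, u, v, rfl, rfl⟩ := exists_common_level hs ht
    exact ⟨n, u \ v, rfl⟩

lemma boundaryMS_eq_generateFrom_cylinders :
    D.boundaryMS = MeasurableSpace.generateFrom D.cylinders := by
  refine le_antisymm (MeasurableSpace.generateFrom_mono ?_) (MeasurableSpace.generateFrom_le ?_)
  · rintro _ ⟨n, x, rfl⟩
    exact ⟨n, {x}, rfl⟩
  · rintro _ ⟨n, u, rfl⟩
    exact measurable_eval n trivial

section Approximation

variable (P : Measure D.Boundary) [IsProbabilityMeasure P]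

lemma eventually_exists_preimage_eval_approx {s : Set D.Boundary} (hs : MeasurableSet s)
    {ε : ℝ≥0∞} (hε : 0 < ε) :
    ∀ᶠ n in atTop, ∃ u : Set (D.T n), P (symmDiff ((fun e : D.Boundary => e.1 n) ⁻¹' u) s) < ε := by
  obtain ⟨_, ⟨m, u, rfl⟩, hu⟩ := exists_measure_symmDiff_lt_of_generateFrom_isSetRing (μ := P)
    isSetRing_cylinders ⟨{Set.univ}, Set.countable_singleton _,
      Set.singleton_subset_iff.2 ⟨0, Set.univ, rfl⟩, by simp⟩
    boundaryMS_eq_generateFrom_cylinders hs hε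
  filter_upwards [eventually_ge_atTop m] with n hn
  obtain ⟨v, hv⟩ := exists_preimage_eval_eq hn u
  exact ⟨v, hv ▸ hu⟩

lemma tendsto_measure_setOf_lt_atTop {g : D.Boundary → ℕ} (hg : Measurable g) :
    Tendsto (fun K : ℕ => P {e | K < g e}) atTop (𝓝 0) := by
  have h := tendsto_measure_iInter_atTop (μ := P) (s := fun K : ℕ => {e | K < g e})
    (fun K => (measurableSet_lt measurable_const hg).nullMeasurableSet)
    (fun _ _ hij _ he => lt_of_le_of_lt hij he) ⟨0, measure_ne_top P _⟩
  have hempty : ⋂ K : ℕ, {e | K < g e} = ∅ :=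
    Set.eq_empty_of_forall_notMem fun e he => lt_irrefl (g e) (Set.mem_iInter.1 he (g e))
  rwa [hempty, measure_empty] at h

lemma eventually_exists_level_approx_nat {g : D.Boundary → ℕ} (hg : Measurable g)
    {ε : ℝ≥0∞} (hε : 0 < ε) :
    ∀ᶠ n in atTop, ∃ σ : D.T n → ℕ, P {e | σ (e.1 n) ≠ g e} < ε := by
  classical
  have hε2 : 0 < ε / 2 := ENNReal.half_pos hε.ne'
  obtain ⟨K, hK⟩ := ((tendsto_measure_setOf_lt_atTop P hg).eventually (gt_mem_nhds hε2)).exists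
  have hη : 0 < ε / 2 / (K + 1) := ENNReal.div_pos hε2.ne' (by simp)
  filter_upwards [(Finset.range (K + 1)).eventually_all.2 fun i _ =>
    eventually_exists_preimage_eval_approx P (hg (measurableSet_singleton i)) hη] with n hn
  choose! u hu using hn
  set ev := fun e : D.Boundary => e.1 n
  set Bad := {e | K < g e} ∪ ⋃ i ∈ Finset.range (K + 1), symmDiff (ev ⁻¹' u i) (g ⁻¹' {i})
  refine ⟨fun x => if h : ∃ i ∈ Finset.range (K + 1), x ∈ u i then h.choose else 0, ?_⟩
  -- Off `Bad`, the only `u i` containing `e.1 n` is `u (g e)`.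
  have hsub : {e | (if h : ∃ i ∈ Finset.range (K + 1), e.1 n ∈ u i then h.choose else 0) ≠ g e}
      ⊆ Bad := by
    intro e he
    by_contra hbad
    simp only [Bad, Set.mem_union, Set.mem_ofPred_eq, Set.mem_iUnion, not_or, not_lt,
      not_exists] at hbad
    have hiff : ∀ i ∈ Finset.range (K + 1), e.1 n ∈ u i ↔ g e = i := fun i hi => by
      have := hbad.2 i hi
      simp only [Set.mem_symmDiff, Set.mem_preimage, Set.mem_singleton_iff, ev] at this
      tauto
    have hge : g e ∈ Finset.range (K + 1) := Finset.mem_range.2 (Nat.lt_succ_of_le hbad.1)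
    have hex : ∃ i ∈ Finset.range (K + 1), e.1 n ∈ u i := ⟨g e, hge, (hiff _ hge).2 rfl⟩
    rw [Set.mem_ofPred_eq, dif_pos hex] at he
    exact he ((hiff _ hex.choose_spec.1).1 hex.choose_spec.2).symm
  calc _ ≤ P Bad := measure_mono hsub
    _ ≤ P {e | K < g e} + ∑ i ∈ Finset.range (K + 1), P (symmDiff (ev ⁻¹' u i) (g ⁻¹' {i})) :=
      (measure_union_le _ _).trans (add_le_add_right (measure_biUnion_finset_le _ _) _)
    _ < ε / 2 + ∑ _i ∈ Finset.range (K + 1), ε / 2 / (K + 1) :=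
      ENNReal.add_lt_add_of_lt_of_le (ENNReal.sum_ne_top.2 fun _ _ => measure_ne_top P _) hK
        (Finset.sum_le_sum fun i hi => (hu i hi).le)
    _ = ε := by
      rw [Finset.sum_const, Finset.card_range, nsmul_eq_mul, Nat.cast_add, Nat.cast_one,
        ENNReal.mul_div_cancel (by simp) (by simp), ENNReal.add_halves]

variable {E : Type} [MetricSpace E] [MeasurableSpace E] [BorelSpace E]
  [TopologicalSpace.SeparableSpace E] [Nonempty E]

lemma eventually_exists_level_approx {h : D.Boundary → E} (hh : Measurable h) {ε : ℝ}
    (hε : 0 < ε) :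
    ∀ᶠ n in atTop, ∃ σ : D.T n → ℕ,
      D.dP P (fun e => TopologicalSpace.denseSeq E (σ (e.1 n))) h < ε := by
  classical
  set es := TopologicalSpace.denseSeq E
  have hex : ∀ e, ∃ i, dist (es i) (h e) < ε / 2 := fun e => by
    simpa only [dist_comm] using
      (TopologicalSpace.denseRange_denseSeq E).exists_dist_lt (h e) (half_pos hε)
  set g := fun e => Nat.find (hex e)
  have hg : Measurable g :=
    measurable_find hex fun i => measurableSet_lt (measurable_const.dist hh) measurable_const
  filter_upwards [eventually_exists_level_approx_nat P hg (ENNReal.ofReal_pos.2 (half_pos hε))]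
    with n ⟨σ, hσ⟩
  refine ⟨σ, ?_⟩
  have hσm : Measurable fun e : D.Boundary => es (σ (e.1 n)) := measurable_eval_comp (es ∘ σ)
  have hgm : Measurable fun e => es (g e) := measurable_from_nat.comp hg
  have hne : P.real {e | es (σ (e.1 n)) ≠ es (g e)} < ε / 2 :=
    (measureReal_mono fun e (he : _ ≠ _) (h' : σ (e.1 n) = g e) => he (congrArg es h')).trans_lt
      (ENNReal.toReal_lt_of_lt_ofReal hσ)
  calc _ ≤ D.dP P (fun e => es (σ (e.1 n))) (fun e => es (g e)) + D.dP P (fun e => es (g e)) h :=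
        dP_triangle P hσm hgm hh
    _ < ε / 2 + ε / 2 := add_lt_add_of_lt_of_le ((dP_le_measureReal_ne P hσm hgm).trans_lt hne)
        (dP_le_of_forall_dist_le P hgm hh fun e => (Nat.find_spec (hex e)).le)
    _ = ε := add_halves ε

lemma exists_dP_dense_seq : ∃ φ : ℕ → D.Boundary → E, (∀ i, Measurable (φ i)) ∧
    ∀ h, Measurable h → ∀ ε > 0, ∃ i, D.dP P (φ i) h < ε := by
  have : Nonempty (Σ m, D.T m → ℕ) := ⟨⟨0, fun _ => 0⟩⟩
  obtain ⟨s, hs⟩ := exists_surjective_nat (Σ m, D.T m → ℕ)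
  set F : (Σ m, D.T m → ℕ) → D.Boundary → E :=
    fun j e => TopologicalSpace.denseSeq E (j.2 (e.1 j.1))
  refine ⟨F ∘ s, fun i => measurable_eval_comp (TopologicalSpace.denseSeq E ∘ (s i).2),
    fun h hh ε hε => ?_⟩
  obtain ⟨m, σ, hσ⟩ := (eventually_exists_level_approx P hh hε).exists
  obtain ⟨i, hi⟩ := hs ⟨m, σ⟩
  exact ⟨i, show D.dP P (F (s i)) h < ε by rw [hi]; exact hσ⟩

end Approximation

def upToLevel (D : TreeData) (N : ℕ) : Set D.Vert := {p | p.1 ≤ N}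

lemma upToLevel_mono : Monotone D.upToLevel := fun _ _ h _ hp => le_trans hp h

lemma omegaMap_congr {E : Type} {f g : D.Vert → E} {n : ℕ} (h : Set.EqOn f g (D.upToLevel n)) :
    D.omegaMap f n = D.omegaMap g n :=
  funext fun _ => h (show n ≤ n from le_rfl)

lemma exists_forall_eqOn_mem {E : Type} [TopologicalSpace E] {g : D.Vert → E}
    {s : Set (D.Vert → E)} (hs : s ∈ 𝓝 g) : ∃ N, ∀ f, Set.EqOn f g (D.upToLevel N) → f ∈ s := by
  rw [nhds_pi, Filter.mem_pi'] at hs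
  obtain ⟨I, t, ht, hIt⟩ := hs
  refine ⟨I.sup Sigma.fst, fun f hf => hIt fun p hp => ?_⟩
  rw [hf (show p.1 ≤ I.sup Sigma.fst from Finset.le_sup (f := Sigma.fst) hp)]
  exact mem_of_mem_nhds (ht p)

section Harmonic

variable {𝔽 E : Type} [Field 𝔽] [AddCommGroup E] [Module 𝔽 E] (w : ∀ n, D.T (n + 1) → 𝔽)

def HarmonicAt (f : D.Vert → E) (n : ℕ) (x : D.T n) : Prop :=
  f ⟨n, x⟩ = ∑ y : {y : D.T (n + 1) // D.par n y = x}, w n y.1 • f ⟨n + 1, y.1⟩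

variable {w} in
lemma HarmonicAt.congr {f g : D.Vert → E} {n : ℕ} {x : D.T n} (hg : HarmonicAt w g n x)
    (hfg : Set.EqOn f g (D.upToLevel (n + 1))) : HarmonicAt w f n x := by
  calc f ⟨n, x⟩ = g ⟨n, x⟩ := hfg (show n ≤ n + 1 from n.le_succ)
    _ = _ := hg
    _ = _ := Finset.sum_congr rfl fun y _ =>
      congrArg (w n y.1 • ·) (hfg (show n + 1 ≤ n + 1 from le_rfl)).symm

variable {w} in
lemma apply_eq_of_harmonicAt {f a : D.Vert → E} {n : ℕ} {x : D.T n} (hf : HarmonicAt w f n x)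
    (ha : HarmonicAt w a n x) (hx : f ⟨n, x⟩ = a ⟨n, x⟩) (y : {y : D.T (n + 1) // D.par n y = x})
    (hy : w n y.1 ≠ 0) (hothers : ∀ z : {z : D.T (n + 1) // D.par n z = x}, z ≠ y →
      f ⟨n + 1, z.1⟩ = a ⟨n + 1, z.1⟩) :
    f ⟨n + 1, y.1⟩ = a ⟨n + 1, y.1⟩ := by
  have hsum : ∑ z : {z : D.T (n + 1) // D.par n z = x},
      w n z.1 • (f ⟨n + 1, z.1⟩ - a ⟨n + 1, z.1⟩) = 0 := by
    unfold HarmonicAt at hf ha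
    rw [Finset.sum_congr rfl fun z _ => smul_sub _ _ _, Finset.sum_sub_distrib, ← hf, ← ha, hx,
      sub_self]
  rw [Finset.sum_eq_single y (fun z _ hz => by rw [hothers z hz, sub_self, smul_zero])
    (fun h => absurd (Finset.mem_univ y) h)] at hsum
  exact sub_eq_zero.1 ((smul_eq_zero.1 hsum).resolve_left hy)

/-- `pushUp w v d i x` is the sum of `v` over the descendants of `x` `d` levels below, weighted
by the products of `w` along the connecting paths. -/
noncomputable def pushUp (v : D.Vert → E) : ℕ → ∀ i, D.T i → E
  | 0, i, x => v ⟨i, x⟩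
  | d + 1, i, x => ∑ y : {y : D.T (i + 1) // D.par i y = x}, w i y.1 • pushUp v d (i + 1) y.1

noncomputable def harmonicAbove (n : ℕ) (v : D.Vert → E) : D.Vert → E :=
  fun p => pushUp w v (n - p.1) p.1 p.2

lemma harmonicAbove_of_le {n : ℕ} (v : D.Vert → E) {i : ℕ} (hi : n ≤ i) (x : D.T i) :
    harmonicAbove w n v ⟨i, x⟩ = v ⟨i, x⟩ := by
  simp only [harmonicAbove, Nat.sub_eq_zero_of_le hi, pushUp]

lemma harmonicAt_harmonicAbove {n : ℕ} (v : D.Vert → E) {i : ℕ} (hi : i < n) (x : D.T i) :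
    HarmonicAt w (harmonicAbove w n v) i x := by
  simp only [HarmonicAt, harmonicAbove, show n - i = n - (i + 1) + 1 by omega, pushUp]

variable (c : ∀ n, D.T n → D.T (n + 1))

open scoped Classical in
/-- Equal to `g` up to level `N`; below, equal to `a` except at the vertices `c i x`, which
absorb the defect of `a` in the harmonic equation at their parent `x`. -/
noncomputable def graft (N : ℕ) (g a : D.Vert → E) : ∀ i, D.T i → E
  | 0, x => g ⟨0, x⟩
  | i + 1, y =>
    if i < N then g ⟨i + 1, y⟩
    else a ⟨i + 1, y⟩ + if y = c i (D.par i y) then (w i y)⁻¹ •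
      (graft N g a i (D.par i y) -
        ∑ z : {z : D.T (i + 1) // D.par i z = D.par i y}, w i z.1 • a ⟨i + 1, z.1⟩) else 0

variable {w c}

lemma graft_of_le {N : ℕ} (g a : D.Vert → E) {i : ℕ} (hi : i ≤ N) (x : D.T i) :
    graft w c N g a i x = g ⟨i, x⟩ := by
  cases i with
  | zero => rfl
  | succ i => simp [graft, show i < N by omega]

lemma graft_of_ne {N : ℕ} (g a : D.Vert → E) {i : ℕ} (hi : N ≤ i) {y : D.T (i + 1)}
    (hy : y ≠ c i (D.par i y)) : graft w c N g a (i + 1) y = a ⟨i + 1, y⟩ := by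
  simp [graft, hy, show ¬ i < N by omega]

lemma harmonic_graft (hw : ∀ n y, w n y ≠ 0) (hc : ∀ n x, D.par n (c n x) = x) {N : ℕ}
    {g : D.Vert → E} (hg : D.Harmonic w g) (a : D.Vert → E) :
    D.Harmonic w (Sigma.uncurry (graft w c N g a)) := by
  classical
  intro i x
  by_cases hi : i < N
  · exact HarmonicAt.congr (hg i x) fun p hp => graft_of_le g a (le_trans hp hi) p.2
  have hchild : ∀ y : {y : D.T (i + 1) // D.par i y = x}, graft w c N g a (i + 1) y.1 =
      a ⟨i + 1, y.1⟩ + if y = ⟨c i x, hc i x⟩ then (w i y.1)⁻¹ • (graft w c N g a i x -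
        ∑ z : {z : D.T (i + 1) // D.par i z = x}, w i z.1 • a ⟨i + 1, z.1⟩) else 0 := by
    rintro ⟨y, rfl⟩
    simp only [graft, if_neg hi, Subtype.mk.injEq]
  show graft w c N g a i x = ∑ y : {y : D.T (i + 1) // D.par i y = x},
    w i y.1 • graft w c N g a (i + 1) y.1
  simp only [hchild, smul_add, Finset.sum_add_distrib, smul_ite, smul_zero, Finset.sum_ite_eq',
    Finset.mem_univ, if_true, smul_smul, mul_inv_cancel₀ (hw _ _), one_smul]
  abel

lemma exists_harmonic_forall_mem {V : ℕ → Set (D.Vert → E)}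
    (hstep : ∀ s g N, D.Harmonic w g → ∃ g' N', D.Harmonic w g' ∧ N < N' ∧
      Set.EqOn g' g (D.upToLevel N) ∧ ∀ f, Set.EqOn f g' (D.upToLevel N') → f ∈ V s)
    {g₀ : D.Vert → E} (hg₀ : D.Harmonic w g₀) (N₀ : ℕ) :
    ∃ f, D.Harmonic w f ∧ Set.EqOn f g₀ (D.upToLevel N₀) ∧ ∀ s, f ∈ V s := by
  choose G M hG hM hGg hGV using hstep
  let seq : ℕ → {g : D.Vert → E // D.Harmonic w g} × ℕ := fun s => Nat.rec (⟨g₀, hg₀⟩, N₀)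
    (fun s p => (⟨G s p.1 p.2 p.1.2, hG s p.1 p.2 p.1.2⟩, M s p.1 p.2 p.1.2)) s
  have hN : StrictMono fun s => (seq s).2 := strictMono_nat_of_lt_succ fun s => hM _ _ _ _
  obtain ⟨f, hf⟩ := exists_eqOn_of_eqOn_succ (fun s => (seq s).1.1)
    (upToLevel_mono.comp hN.monotone) (fun p => ⟨p.1, hN.le_apply⟩) fun s => hGg _ _ _ _
  refine ⟨f, fun i x => HarmonicAt.congr ((seq (i + 1)).1.2 i x)
    ((hf (i + 1)).mono (upToLevel_mono hN.le_apply)), hf 0, fun s => hGV _ _ _ _ f (hf (s + 1))⟩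

end Harmonic

section LightPaths

variable {q : ∀ n, D.T (n + 1) → ℝ}

lemma exists_child_le_half
    (hq1 : ∀ n (x : D.T n), ∑ y : {y : D.T (n + 1) // D.par n y = x}, q n y.1 = 1)
    (n : ℕ) (x : D.T n) : ∃ y : D.T (n + 1), D.par n y = x ∧ q n y ≤ 1 / 2 := by
  by_contra! h
  have hcard : 2 ≤ Fintype.card {y : D.T (n + 1) // D.par n y = x} := by
    simpa only [Nat.card_eq_fintype_card] using D.twoChildren n x
  have hlt : ∑ _y : {y : D.T (n + 1) // D.par n y = x}, (1 / 2 : ℝ) <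
      ∑ y : {y : D.T (n + 1) // D.par n y = x}, q n y.1 :=
    Finset.sum_lt_sum_of_nonempty (Finset.univ_nonempty_iff.2 (Fintype.card_pos_iff.1 (by omega)))
      fun y _ => h y.1 y.2
  rw [hq1, Finset.sum_const, Finset.card_univ, nsmul_eq_mul] at hlt
  have : (2 : ℝ) ≤ Fintype.card {y : D.T (n + 1) // D.par n y = x} := by exact_mod_cast hcard
  linarith

variable (P : Measure D.Boundary)

lemma measure_sector_succ (hq0 : ∀ n y, 0 < q n y)
    (hP : ∀ n (x : D.T n), P (D.sector n x) = ENNReal.ofReal (D.pathProb q n x))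
    (n : ℕ) (y : D.T (n + 1)) :
    P (D.sector (n + 1) y) = P (D.sector n (D.par n y)) * ENNReal.ofReal (q n y) := by
  rw [hP, hP, ← ENNReal.ofReal_mul' (hq0 n y).le]
  rfl

lemma measure_child_le_half (hq0 : ∀ n y, 0 < q n y)
    (hP : ∀ n (x : D.T n), P (D.sector n x) = ENNReal.ofReal (D.pathProb q n x))
    {c : ∀ n, D.T n → D.T (n + 1)} (hc : ∀ n x, D.par n (c n x) = x)
    (hcq : ∀ n x, q n (c n x) ≤ 1 / 2) (n : ℕ) (B : Set (D.T n)) :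
    P {e | e.1 n ∈ B ∧ e.1 (n + 1) = c n (e.1 n)} ≤ P {e | e.1 n ∈ B} * 2⁻¹ := by
  have hhalf : ∀ x, ENNReal.ofReal (q n (c n x)) ≤ 2⁻¹ := fun x =>
    (ENNReal.ofReal_le_ofReal (hcq n x)).trans_eq (by
      rw [one_div, ENNReal.ofReal_inv_of_pos two_pos, ENNReal.ofReal_ofNat])
  calc P {e | e.1 n ∈ B ∧ e.1 (n + 1) = c n (e.1 n)}
      ≤ P (⋃ x ∈ B, D.sector (n + 1) (c n x)) :=
        measure_mono fun e he => Set.mem_biUnion he.1 he.2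
    _ ≤ ∑' x : B, P (D.sector (n + 1) (c n x)) := measure_biUnion_le P B.to_countable _
    _ ≤ ∑' x : B, P ((fun e : D.Boundary => e.1 n) ⁻¹' {x.1}) * 2⁻¹ :=
        ENNReal.tsum_le_tsum fun x => by
          rw [measure_sector_succ P hq0 hP, hc]
          exact mul_le_mul_right (hhalf x) _
    _ = P {e | e.1 n ∈ B} * 2⁻¹ := by
        rw [ENNReal.tsum_mul_right,
          tsum_measure_preimage_singleton B.to_countable fun x _ => measurable_eval n trivial]
        rfl

variable {𝔽 E : Type} [Field 𝔽] [AddCommGroup E] [Module 𝔽 E] {w : ∀ n, D.T (n + 1) → 𝔽}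
  {c : ∀ n, D.T n → D.T (n + 1)}

lemma setOf_omegaMap_ne_succ_subset (hw : ∀ n y, w n y ≠ 0)
    {f a : D.Vert → E} {i : ℕ} (hf : ∀ x, HarmonicAt w f i x) (ha : ∀ x, HarmonicAt w a i x)
    (hoff : ∀ y : D.T (i + 1), y ≠ c i (D.par i y) → f ⟨i + 1, y⟩ = a ⟨i + 1, y⟩) :
    {e | D.omegaMap f (i + 1) e ≠ D.omegaMap a (i + 1) e} ⊆
      {e | e.1 i ∈ {x | f ⟨i, x⟩ ≠ a ⟨i, x⟩} ∧ e.1 (i + 1) = c i (e.1 i)} := by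
  intro e he
  by_contra hbad
  refine he ?_
  show f ⟨i + 1, e.1 (i + 1)⟩ = a ⟨i + 1, e.1 (i + 1)⟩
  have hpar : D.par i (e.1 (i + 1)) = e.1 i := e.2 i
  by_cases hy : e.1 (i + 1) = c i (e.1 i)
  · have hx : f ⟨i, e.1 i⟩ = a ⟨i, e.1 i⟩ := not_not.1 fun hx => hbad ⟨hx, hy⟩
    refine apply_eq_of_harmonicAt (hf _) (ha _) hx ⟨_, hpar⟩ (hw _ _) fun z hz => hoff z.1 ?_
    rw [z.2, ← hy]
    exact fun h => hz (Subtype.ext h)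
  · exact hoff _ (by rwa [hpar])

lemma measure_omegaMap_ne_le [IsProbabilityMeasure P] (hw : ∀ n y, w n y ≠ 0)
    (hq0 : ∀ n y, 0 < q n y)
    (hP : ∀ n (x : D.T n), P (D.sector n x) = ENNReal.ofReal (D.pathProb q n x))
    (hc : ∀ n x, D.par n (c n x) = x) (hcq : ∀ n x, q n (c n x) ≤ 1 / 2)
    {f a : D.Vert → E} {N n : ℕ} (hf : D.Harmonic w f)
    (ha : ∀ i, i < n → ∀ x, HarmonicAt w a i x)
    (hoff : ∀ i, N ≤ i → ∀ y : D.T (i + 1), y ≠ c i (D.par i y) → f ⟨i + 1, y⟩ = a ⟨i + 1, y⟩) :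
    ∀ j, N + j ≤ n → P {e | D.omegaMap f (N + j) e ≠ D.omegaMap a (N + j) e} ≤ 2⁻¹ ^ j
  | 0, _ => by simpa using prob_le_one
  | j + 1, hj => by
    rw [← add_assoc, pow_succ]
    calc _ ≤ P {e | e.1 (N + j) ∈ {x | f ⟨N + j, x⟩ ≠ a ⟨N + j, x⟩} ∧
          e.1 (N + j + 1) = c (N + j) (e.1 (N + j))} :=
          measure_mono (setOf_omegaMap_ne_succ_subset hw (hf _) (ha _ (by omega))
            (hoff _ (by omega)))
      _ ≤ _ * 2⁻¹ := measure_child_le_half P hq0 hP hc hcq _ _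
      _ ≤ 2⁻¹ ^ j * 2⁻¹ := by
          gcongr
          exact measure_omegaMap_ne_le hw hq0 hP hc hcq hf ha hoff j (by omega)

end LightPaths

section Universality

variable (P : Measure D.Boundary) [IsProbabilityMeasure P] {E : Type} [MetricSpace E]
  [MeasurableSpace E] [BorelSpace E] [TopologicalSpace.SeparableSpace E]

theorem exists_harmonic_near {𝔽 : Type} [Field 𝔽] [AddCommGroup E] [Module 𝔽 E]
    {w : ∀ n, D.T (n + 1) → 𝔽} (hw : ∀ n y, w n y ≠ 0) {q : ∀ n, D.T (n + 1) → ℝ}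
    (hq0 : ∀ n y, 0 < q n y)
    (hq1 : ∀ n (x : D.T n), ∑ y : {y : D.T (n + 1) // D.par n y = x}, q n y.1 = 1)
    (hP : ∀ n (x : D.T n), P (D.sector n x) = ENNReal.ofReal (D.pathProb q n x))
    {τ : Set ℕ} (hτ : τ.Infinite) {g : D.Vert → E} (hg : D.Harmonic w g) (N : ℕ)
    {h : D.Boundary → E} (hh : Measurable h) {ε : ℝ} (hε : 0 < ε) :
    ∃ f n, D.Harmonic w f ∧ n ∈ τ ∧ N < n ∧ Set.EqOn f g (D.upToLevel N) ∧
      D.dP P (D.omegaMap f n) h < ε := by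
  choose c hc hcq using exists_child_le_half hq1
  obtain ⟨j, hj⟩ := exists_pow_lt_of_lt_one (half_pos hε) (by norm_num : (2⁻¹ : ℝ) < 1)
  obtain ⟨n, hnτ, hjn, σ, hσ⟩ := ((Nat.frequently_atTop_iff_infinite.2 hτ).and_eventually
    ((eventually_gt_atTop (N + j)).and
      (eventually_exists_level_approx P hh (half_pos hε)))).exists
  obtain ⟨k, rfl⟩ := Nat.exists_eq_add_of_le (show N ≤ n by omega)
  set t : D.T (N + k) → E := fun y => TopologicalSpace.denseSeq E (σ y)
  -- `u` is harmonic above level `N + k` and equals `t` there; grafting `u` below `g` changes it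
  -- at level `N + k` only along the light paths chosen by `c`, a set of measure `≤ 2⁻¹ ^ k`.
  set u := harmonicAbove w (N + k) fun p : D.Vert =>
    Function.update (0 : ∀ i, D.T i → E) (N + k) t p.1 p.2
  set f := Sigma.uncurry (graft w c N g u)
  have hf : D.Harmonic w f := harmonic_graft hw hc hg u
  have hu : D.omegaMap u (N + k) = fun e => t (e.1 (N + k)) := funext fun e =>
    (harmonicAbove_of_le w _ le_rfl _).trans (congrFun (Function.update_self ..) _)
  have hfu : P {e | D.omegaMap f (N + k) e ≠ D.omegaMap u (N + k) e} ≤ 2⁻¹ ^ k :=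
    measure_omegaMap_ne_le P hw hq0 hP hc hcq hf (fun i hi x => harmonicAt_harmonicAbove w _ hi x)
      (fun i hi y hy => graft_of_ne g u hi hy) k le_rfl
  have hfu' : P.real {e | D.omegaMap f (N + k) e ≠ D.omegaMap u (N + k) e} < ε / 2 := by
    refine lt_of_le_of_lt ?_ ((pow_le_pow_of_le_one (by norm_num) (by norm_num)
      (show j ≤ k by omega)).trans_lt hj)
    simpa [measureReal_def] using ENNReal.toReal_mono (by simp) hfu
  refine ⟨f, N + k, hf, hnτ, by omega, fun p hp => graft_of_le g u hp p.2, ?_⟩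
  calc D.dP P (D.omegaMap f (N + k)) h
      ≤ D.dP P (D.omegaMap f (N + k)) (D.omegaMap u (N + k)) + D.dP P (D.omegaMap u (N + k)) h :=
        dP_triangle P (measurable_omegaMap _ _) (measurable_omegaMap _ _) hh
    _ < ε / 2 + ε / 2 := add_lt_add
        ((dP_le_measureReal_ne P (measurable_omegaMap _ _) (measurable_omegaMap _ _)).trans_lt hfu')
        (hu ▸ hσ)
    _ = ε := add_halves ε

def hitSet (τ : Set ℕ) (φ : D.Boundary → E) (ε : ℝ) : Set (D.Vert → E) :=
  {f | ∃ n ∈ τ, D.dP P (D.omegaMap f n) φ < ε}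

lemma continuous_dP_omegaMap {φ : D.Boundary → E} (hφ : Measurable φ) (n : ℕ) :
    Continuous fun f : D.Vert → E => D.dP P (D.omegaMap f n) φ := by
  have hmeas : ∀ t : D.T n → E, Measurable fun e : D.Boundary => t (e.1 n) :=
    measurable_eval_comp
  have hG : LipschitzWith 1 fun t : D.T n → E => D.dP P (fun e => t (e.1 n)) φ :=
    LipschitzWith.of_le_add fun t t' => by
      refine (dP_triangle P (hmeas t) (hmeas t') hφ).trans ?_
      rw [add_comm]
      gcongr
      exact dP_le_of_forall_dist_le P (hmeas t) (hmeas t') fun e => dist_le_pi_dist t t' _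
  have hres : Continuous fun f : D.Vert → E => fun x : D.T n => f ⟨n, x⟩ :=
    continuous_pi fun x => continuous_apply _
  exact hG.continuous.comp hres

lemma isOpen_hitSet (τ : Set ℕ) {φ : D.Boundary → E} (hφ : Measurable φ) (ε : ℝ) :
    IsOpen (hitSet P τ φ ε) := by
  have : hitSet P τ φ ε = ⋃ n ∈ τ, {f | D.dP P (D.omegaMap f n) φ < ε} := by
    ext f
    simp [hitSet]
  rw [this]
  exact isOpen_biUnion fun n _ => isOpen_lt (continuous_dP_omegaMap P hφ n) continuous_const

lemma univOn_iff {φ : ℕ → D.Boundary → E} (hφm : ∀ i, Measurable (φ i))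
    (hφ : ∀ h, Measurable h → ∀ ε > 0, ∃ i, D.dP P (φ i) h < ε) {τ : Set ℕ} {f : D.Vert → E} :
    D.UnivOn P τ f ↔ ∀ i k : ℕ, f ∈ hitSet P τ (φ i) (1 / (k + 1)) := by
  refine ⟨fun hf i k => hf _ (hφm i) _ Nat.one_div_pos_of_nat, fun hf h hh ε hε => ?_⟩
  obtain ⟨i, hi⟩ := hφ h hh (ε / 2) (half_pos hε)
  obtain ⟨k, hk⟩ := exists_nat_one_div_lt (half_pos hε)
  obtain ⟨n, hnτ, hn⟩ := hf i k
  exact ⟨n, hnτ, (dP_triangle P (measurable_omegaMap f n) (hφm i) hh).trans_lt (by linarith)⟩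

lemma isGδ_setOf_univOn [Nonempty E] (τ : Set ℕ) : IsGδ {f : D.Vert → E | D.UnivOn P τ f} := by
  obtain ⟨φ, hφm, hφ⟩ := exists_dP_dense_seq (E := E) P
  have : {f : D.Vert → E | D.UnivOn P τ f} = ⋂ i, ⋂ k : ℕ, hitSet P τ (φ i) (1 / (k + 1)) := by
    ext f
    simp [univOn_iff P hφm hφ]
  rw [this]
  exact IsGδ.iInter fun i => IsGδ.iInter_of_isOpen fun k => isOpen_hitSet P τ (hφm i) _

theorem exists_harmonic_univOn {𝔽 : Type} [Field 𝔽] [AddCommGroup E] [Module 𝔽 E]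
    {w : ∀ n, D.T (n + 1) → 𝔽} (hw : ∀ n y, w n y ≠ 0) {q : ∀ n, D.T (n + 1) → ℝ}
    (hq0 : ∀ n y, 0 < q n y)
    (hq1 : ∀ n (x : D.T n), ∑ y : {y : D.T (n + 1) // D.par n y = x}, q n y.1 = 1)
    (hP : ∀ n (x : D.T n), P (D.sector n x) = ENNReal.ofReal (D.pathProb q n x))
    {τ : Set ℕ} (hτ : τ.Infinite) {g : D.Vert → E} (hg : D.Harmonic w g) (N : ℕ) :
    ∃ f, D.Harmonic w f ∧ Set.EqOn f g (D.upToLevel N) ∧ D.UnivOn P τ f := by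
  obtain ⟨φ, hφm, hφ⟩ := exists_dP_dense_seq (E := E) P
  obtain ⟨f, hf, hfg, hfV⟩ := exists_harmonic_forall_mem
    (V := fun s => hitSet P τ (φ s.unpair.1) (1 / (s.unpair.2 + 1)))
    (fun s g N hg => by
      obtain ⟨g', n, hg', hnτ, hNn, hg'g, hn⟩ :=
        exists_harmonic_near P hw hq0 hq1 hP hτ hg N (hφm _) Nat.one_div_pos_of_nat
      exact ⟨g', n, hg', hNn, hg'g, fun f hf => ⟨n, hnτ, omegaMap_congr hf ▸ hn⟩⟩) hg N
  exact ⟨f, hf, hfg, (univOn_iff P hφm hφ).2 fun i k => by simpa using hfV (Nat.pair i k)⟩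

end Universality

end TreeData

theorem universality_dense_Gdelta_general (D : TreeData)
    (w : ∀ n, D.T (n + 1) → 𝔽) (hw : ∀ n y, w n y ≠ 0)
    (q : ∀ n, D.T (n + 1) → ℝ) (hq0 : ∀ n y, 0 < q n y)
    (hq1 : ∀ n (x : D.T n), ∑ y : {y : D.T (n + 1) // D.par n y = x}, q n y.1 = 1)
    (P : Measure D.Boundary) [IsProbabilityMeasure P]
    (hP : ∀ n (x : D.T n), P (D.sector n x) = ENNReal.ofReal (D.pathProb q n x))
    (τ : Set ℕ) (hτ : τ.Infinite) :
    IsGδ {f : ↥(D.harmonicSet E w) | D.UnivOn P τ f.1} ∧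
      Dense {f : ↥(D.harmonicSet E w) | D.UnivOn P τ f.1} := by
  refine ⟨(TreeData.isGδ_setOf_univOn P τ).preimage continuous_subtype_val, ?_⟩
  rw [dense_iff_inter_open]
  rintro O hO ⟨g₀, hg₀O⟩
  obtain ⟨O', hO', rfl⟩ := isOpen_induced_iff.1 hO
  obtain ⟨N₀, hN₀⟩ := TreeData.exists_forall_eqOn_mem (hO'.mem_nhds hg₀O)
  obtain ⟨f, hf, hfg₀, hfU⟩ := TreeData.exists_harmonic_univOn P hw hq0 hq1 hP hτ g₀.2 N₀
  exact ⟨⟨f, hf⟩, hN₀ f hfg₀, hfU⟩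

/-- For any infinite τ ⊆ ℕ, the set U_τ(T,E) of generalized harmonic
functions f such that (ω_n f)_{n ∈ τ} is dense in L⁰(∂T,E) is a dense Gδ subset of
H(T,E) (with the topology induced from the product topology on E^T). -/
theorem universality_dense_Gdelta (D : TreeData)
    (w : ∀ n, D.T (n + 1) → 𝔽) (hw : ∀ n y, w n y ≠ 0)
    (hdist : ∀ a x y : E, dist (a + x) (a + y) = dist x y)
    (q : ∀ n, D.T (n + 1) → ℝ) (hq0 : ∀ n y, 0 < q n y)
    (hq1 : ∀ n (x : D.T n), ∑ y : {y : D.T (n + 1) // D.par n y = x}, q n y.1 = 1)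
    (P : Measure D.Boundary) [IsProbabilityMeasure P]
    (hP : ∀ n (x : D.T n), P (D.sector n x) = ENNReal.ofReal (D.pathProb q n x))
    (τ : Set ℕ) (hτ : τ.Infinite) :
    IsGδ {f : ↥(D.harmonicSet E w) | D.UnivOn P τ f.1} ∧
      Dense {f : ↥(D.harmonicSet E w) | D.UnivOn P τ f.1} :=
  universality_dense_Gdelta_general D w hw q hq0 hq1 P hP τ hτ
end

section
/- Extension lemma: let N < K be natural numbers and let f : T_0 ∪ … ∪ T_N → E satisfy f(x) = Σ_{y ∈ S(x)} w(x,y) f(y) for all x ∈ T_0 ∪ … ∪ T_{N−1}. For each x ∈ T_N let β(x) ∈ T_K be a descendant of x (i.e., some geodesic contains both x and β(x)), and let g : T_K \ {β(x) : x ∈ T_N} → E be arbitrary. Then there exists F : T_0 ∪ … ∪ T_K → E extending f, with F(y) = g(y) for all y ∈ T_K \ {β(x) : x ∈ T_N}, and F(z) = Σ_{ℓ ∈ S(z)} w(z,ℓ) F(ℓ) for all z ∈ T_0 ∪ … ∪ T_{K−1}. -/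
open MeasureTheory Filter Topology

/-- The ancestor at level `n` of a vertex at level `n + k`. -/
def TreeData.anc (D : TreeData) : ∀ (k n : ℕ), D.T (n + k) → D.T n
  | 0, _, z => z
  | k + 1, n, z => D.anc k n (D.par (n + k) z)

theorem harmonic_extension_aux (D : TreeData) {𝔽 E : Type} [Field 𝔽] [AddCommGroup E]
    [Module 𝔽 E]
    (w : ∀ n, D.T (n + 1) → 𝔽) (hw : ∀ n y, w n y ≠ 0)
    (N : ℕ)
    (f : ∀ n, D.T n → E)
    (hf : ∀ n, n < N → ∀ x : D.T n,
      f n x = ∑ y : {y : D.T (n + 1) // D.par n y = x}, w n y.1 • f (n + 1) y.1)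
    (k : ℕ) :
    ∀ (β : D.T N → D.T (N + k)), (∀ x : D.T N, D.anc k N (β x) = x) →
    ∀ (g : D.T (N + k) → E),
    ∃ F : ∀ n, D.T n → E,
      (∀ n, n ≤ N → ∀ x : D.T n, F n x = f n x) ∧
      (∀ z : D.T (N + k), (∀ x : D.T N, z ≠ β x) → F (N + k) z = g z) ∧
      (∀ n, n < N + k → ∀ x : D.T n,
        F n x = ∑ y : {y : D.T (n + 1) // D.par n y = x}, w n y.1 • F (n + 1) y.1) := by
  classical
  induction k with
  | zero =>
    intro β hβ g
    exact ⟨f, fun n _ x => rfl,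
      fun z hz => absurd (hβ z).symm (hz z),
      fun n hn x => hf n hn x⟩
  | succ k ih =>
    intro β hβ g
    -- the ancestor map one level down
    set β' : D.T N → D.T (N + k) := fun x => D.par (N + k) (β x) with hβ'def
    have hβ' : ∀ x : D.T N, D.anc k N (β' x) = x := fun x => hβ x
    -- prescribed values at level N + k away from range of β'
    set g' : D.T (N + k) → E := fun x =>
      ∑ y : {y : D.T (N + k + 1) // D.par (N + k) y = x},
        (if ∃ x₀, β x₀ = y.1 then 0 else w (N + k) y.1 • g y.1) with hg'def
    obtain ⟨F', hF'f, hF'g, hF'harm⟩ := ih β' hβ' g'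
    -- the top level
    set Ftop : D.T (N + k + 1) → E := fun z =>
      if ∃ x₀, β x₀ = z then
        (w (N + k) z)⁻¹ • (F' (N + k) (D.par (N + k) z) -
          ∑ y : {y : D.T (N + k + 1) // D.par (N + k) y = D.par (N + k) z},
            (if y.1 = z then 0 else w (N + k) y.1 • g y.1))
      else g z with hFtopdef
    set F : ∀ n, D.T n → E := fun n =>
      if h : n = N + k + 1 then fun x => Ftop (cast (congrArg D.T h) x) else F' n
      with hFdef
    have hFtop : F (N + k + 1) = Ftop := by
      funext z
      simp [hFdef]
    have hFlo : ∀ n, n ≤ N + k → F n = F' n := by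
      intro n hn
      simp only [hFdef]
      rw [dif_neg (by omega)]
    refine ⟨F, ?_, ?_, ?_⟩
    · intro n hn x
      rw [hFlo n (by omega), hF'f n hn]
    · intro z hz
      show F (N + k + 1) z = g z
      rw [hFtop]
      simp only [hFtopdef]
      rw [if_neg]
      rintro ⟨x₀, hx₀⟩
      exact hz x₀ hx₀.symm
    · intro n hn x
      have hn2 : n < N + k + 1 := hn
      rcases lt_or_eq_of_le (Nat.lt_succ_iff.mp hn2) with hn' | hn'
      · rw [hFlo n (by omega), hFlo (n + 1) (by omega)]
        exact hF'harm n hn' x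
      · subst hn'
        rw [hFlo _ le_rfl, hFtop]
        by_cases hx : ∃ x₀, β' x₀ = x
        · -- x is the parent of some β x₀
          obtain ⟨x₀, hx₀⟩ := hx
          have hy₀ : D.par (N + k) (β x₀) = x := hx₀
          subst hy₀
          set y₀ : D.T (N + k + 1) := β x₀ with hy₀def
          -- any child of par y₀ in the range of β equals y₀
          have huniq : ∀ z : D.T (N + k + 1), D.par (N + k) z = D.par (N + k) y₀ →
              (∃ x₁, β x₁ = z) → z = y₀ := by
            rintro z hpz ⟨x₁, hx₁⟩
            have h1 : D.anc (k + 1) N z = x₁ := by rw [← hx₁]; exact hβ x₁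
            have h2 : D.anc (k + 1) N z = x₀ := by
              show D.anc k N (D.par (N + k) z) = x₀
              rw [hpz]
              exact hβ x₀
            rw [← hx₁, h1.symm.trans h2]
          set y₀' : {y : D.T (N + k + 1) // D.par (N + k) y = D.par (N + k) y₀} :=
            ⟨y₀, rfl⟩ with hy₀'def
          rw [← Finset.sum_erase_add _ _ (Finset.mem_univ y₀')]
          have hFtopy₀ : Ftop y₀ =
              (w (N + k) y₀)⁻¹ • (F' (N + k) (D.par (N + k) y₀) -
              ∑ y : {y : D.T (N + k + 1) // D.par (N + k) y = D.par (N + k) y₀},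
                (if y.1 = y₀ then 0 else w (N + k) y.1 • g y.1)) := by
            simp only [hFtopdef]
            rw [if_pos ⟨x₀, rfl⟩]
          have hsum : (∑ y : {y : D.T (N + k + 1) // D.par (N + k) y = D.par (N + k) y₀},
                (if y.1 = y₀ then 0 else w (N + k) y.1 • g y.1)) =
              ∑ y ∈ Finset.univ.erase y₀', w (N + k) y.1 • g y.1 := by
            rw [← Finset.sum_erase_add _ _ (Finset.mem_univ y₀')]
            rw [if_pos rfl, add_zero]
            refine Finset.sum_congr rfl fun y hy => ?_
            rw [if_neg]
            intro h
            exact (Finset.mem_erase.mp hy).1 (Subtype.ext h)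
          have herase : ∀ y ∈ Finset.univ.erase y₀',
              w (N + k) (y : {y : D.T (N + k + 1) //
                D.par (N + k) y = D.par (N + k) y₀}).1 • Ftop y.1 =
              w (N + k) y.1 • g y.1 := by
            intro y hy
            have : Ftop y.1 = g y.1 := by
              simp only [hFtopdef]
              rw [if_neg]
              intro hex
              exact (Finset.mem_erase.mp hy).1
                (Subtype.ext (huniq y.1 y.2 hex))
            rw [this]
          rw [Finset.sum_congr rfl herase, hFtopy₀,
            smul_inv_smul₀ (hw _ _), hsum]
          abel
        · -- no child of x is in the range of β
          have hchild : ∀ y : {y : D.T (N + k + 1) // D.par (N + k) y = x},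
              Ftop y.1 = g y.1 := by
            rintro ⟨y, hy⟩
            simp only [hFtopdef]
            rw [if_neg]
            rintro ⟨x₀, hx₀⟩
            exact hx ⟨x₀, by rw [hβ'def]; simp only; rw [hx₀, hy]⟩
          have hxg : F' (N + k) x = g' x := by
            apply hF'g
            intro x₀ h
            exact hx ⟨x₀, h.symm⟩
          rw [hxg]
          simp only [hg'def]
          refine Finset.sum_congr rfl fun y _ => ?_
          rw [hchild y, if_neg]
          rintro ⟨x₀, hx₀⟩
          exact hx ⟨x₀, by rw [hβ'def]; simp only; rw [hx₀, y.2]⟩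

/-- **extension lemma.** Let N < K = N + k, let f be defined on levels
0,…,N and harmonic up to level N−1, let β(x) ∈ T_K be a descendant of x for each
x ∈ T_N and let g be arbitrary on T_K \ {β(x) : x ∈ T_N}. Then there is F defined on
levels 0,…,K extending f, agreeing with g on T_K off {β(x)}, and harmonic up to K−1. -/
theorem harmonic_extension (D : TreeData) {𝔽 E : Type} [Field 𝔽] [AddCommGroup E]
    [Module 𝔽 E]
    (w : ∀ n, D.T (n + 1) → 𝔽) (hw : ∀ n y, w n y ≠ 0)
    (N k : ℕ) (hk : 0 < k)
    (f : ∀ n, D.T n → E)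
    (hf : ∀ n, n < N → ∀ x : D.T n,
      f n x = ∑ y : {y : D.T (n + 1) // D.par n y = x}, w n y.1 • f (n + 1) y.1)
    (β : D.T N → D.T (N + k)) (hβ : ∀ x : D.T N, D.anc k N (β x) = x)
    (g : D.T (N + k) → E) :
    ∃ F : ∀ n, D.T n → E,
      (∀ n, n ≤ N → ∀ x : D.T n, F n x = f n x) ∧
      (∀ z : D.T (N + k), (∀ x : D.T N, z ≠ β x) → F (N + k) z = g z) ∧
      (∀ n, n < N + k → ∀ x : D.T n,
        F n x = ∑ y : {y : D.T (n + 1) // D.par n y = x}, w n y.1 • F (n + 1) y.1) := by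
  exact harmonic_extension_aux D w hw N f hf k β hβ g
end

section
/- For k ≥ 1 write k = 2^s · d with d odd and set ℓ(k) = s + 1, and set r_k = Σ_{n=1}^{k} ℓ(n). Then for every m ≥ 1, the set {r_n : n ≥ 1 and ℓ(n) = m} ⊆ ℕ has strictly positive lower density, i.e., liminf_{N→∞} |{r_n : ℓ(n) = m} ∩ {0,…,N−1}|/N > 0. -/
open MeasureTheory Filter Topology

/-- `ℓ(k) = s + 1` where `k = 2 ^ s * d` with `d` odd. -/
def ell (k : ℕ) : ℕ := padicValNat 2 k + 1

/-- `r_k = Σ_{n=1}^{k} ℓ(n)`. -/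
def rSum (k : ℕ) : ℕ := ∑ n ∈ Finset.Icc 1 k, ell n
lemma ell_one_le (n : ℕ) : 1 ≤ ell n := Nat.le_add_left 1 _

lemma rSum_succ (n : ℕ) : rSum (n + 1) = rSum n + ell (n + 1) :=
  Finset.sum_Icc_succ_top (Nat.succ_le_succ (Nat.zero_le n)) _

lemma rSum_strictMono : StrictMono rSum := by
  apply strictMono_nat_of_lt_succ
  intro n
  rw [rSum_succ]
  have := ell_one_le (n + 1)
  omega

lemma sum_padic (n : ℕ) :
    ∑ k ∈ Finset.Icc 1 n, padicValNat 2 k = padicValNat 2 (Nat.factorial n) := by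
  induction n with
  | zero => simp
  | succ n ih =>
    rw [Finset.sum_Icc_succ_top (Nat.succ_le_succ (Nat.zero_le n)), ih,
      Nat.factorial_succ, padicValNat.mul (by omega) (Nat.factorial_ne_zero n)]
    omega

lemma digitsum_pos : ∀ n : ℕ, 1 ≤ n → 0 < (Nat.digits 2 n).sum := by
  intro n
  induction n using Nat.strong_induction_on with
  | _ n ih =>
    intro hn
    rw [Nat.digits_def' (by norm_num) (by omega)]
    simp only [List.sum_cons]
    rcases Nat.even_or_odd n with he | ho
    · have hne := Nat.even_iff.mp he
      have h2 : 1 ≤ n / 2 := by omega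
      have := ih (n / 2) (by omega) h2
      omega
    · have : n % 2 = 1 := Nat.odd_iff.mp ho
      omega

lemma rSum_eq (n : ℕ) : rSum n = n + padicValNat 2 (Nat.factorial n) := by
  have h : ∑ k ∈ Finset.Icc 1 n, ell k
      = (∑ k ∈ Finset.Icc 1 n, padicValNat 2 k) + n := by
    simp [ell, Finset.sum_add_distrib]
  rw [rSum, h, sum_padic]
  omega

lemma rSum_le (n : ℕ) (hn : 1 ≤ n) : rSum n ≤ 2 * n - 1 := by
  have h := sub_one_mul_padicValNat_factorial (p := 2) n
  have hd := digitsum_pos n hn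
  have hds := Nat.digit_sum_le 2 n
  have := rSum_eq n
  omega

lemma ell_pow_mul (s j : ℕ) : ell (2 ^ s * (2 * j + 1)) = s + 1 := by
  unfold ell
  rw [padicValNat.mul (by positivity) (by omega),
    padicValNat.prime_pow, padicValNat.eq_zero_of_not_dvd (by omega)]

/-- For every m ≥ 1, the set `{r_n : n ≥ 1, ℓ(n) = m}` has strictly
positive lower density. -/
theorem rSum_fiber_pos_lowerDensity (m : ℕ) (hm : 1 ≤ m) :
    0 < lowerDensity {N : ℕ | ∃ n : ℕ, 1 ≤ n ∧ ell n = m ∧ rSum n = N} := by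
  obtain ⟨s, rfl⟩ : ∃ s, m = s + 1 := ⟨m - 1, by omega⟩
  set A : Set ℕ := {N : ℕ | ∃ n : ℕ, 1 ≤ n ∧ ell n = s + 1 ∧ rSum n = N} with hA
  set P : ℕ := 2 ^ (s + 2) with hP
  set Q : ℕ := 2 ^ (s + 1) with hQ
  have hPQ : P = 2 * Q := by rw [hP, hQ]; ring
  have hQ2 : 2 ≤ Q := by
    calc 2 = 2 ^ 1 := (pow_one 2).symm
    _ ≤ Q := Nat.pow_le_pow_right (by norm_num) (by omega)
  have hPpos : 0 < P := by positivity
  have main : ∀ N : ℕ, 2 * P ≤ N →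
      (1 : ℝ) / (2 * P) ≤ ((A ∩ Set.Iio N).ncard : ℝ) / N := by
    intro N hN
    set K := N / P with hK
    have hPK : P * K ≤ N := by rw [hK, mul_comm]; exact Nat.div_mul_le_self N P
    have hltN : N < P * (K + 1) := Nat.lt_mul_div_succ N hPpos
    have hltN' : N < P * K + P := by
      have h' : P * (K + 1) = P * K + P := by ring
      omega
    set F : ℕ → ℕ := fun j => rSum (2 ^ s * (2 * j + 1)) with hF
    have hFinj : Function.Injective F := by
      intro a b hab
      have h1 := rSum_strictMono.injective hab
      have h2 : (2 : ℕ) ^ s ≠ 0 := by positivity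
      have := mul_left_cancel₀ h2 h1
      omega
    set S := Finset.image F (Finset.range K) with hS
    have hcard : S.card = K := by
      rw [hS, Finset.card_image_of_injective _ hFinj, Finset.card_range]
    have hsub : (S : Set ℕ) ⊆ A ∩ Set.Iio N := by
      intro x hx
      simp only [hS, Finset.coe_image, Finset.coe_range, Set.mem_image,
        Set.mem_Iio] at hx
      obtain ⟨j, hj, rfl⟩ := hx
      have hj' : j < K := hj
      constructor
      · have h0 : 0 < 2 ^ s * (2 * j + 1) := by positivity
        exact ⟨2 ^ s * (2 * j + 1), h0, ell_pow_mul s j, rfl⟩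
      · have h1 : 0 < 2 ^ s * (2 * j + 1) := by positivity
        have h2 := rSum_le _ h1
        have h2n : 2 * (2 ^ s * (2 * j + 1)) = Q * (2 * j + 1) := by
          rw [hQ]; ring
        have hle : Q * (2 * j + 1) + Q ≤ P * K := by
          have h' : Q * (2 * j + 1) + Q = P * (j + 1) := by rw [hPQ]; ring
          rw [h']
          exact Nat.mul_le_mul_left P (by omega)
        simp only [Set.mem_Iio, hF]
        omega
    have hfin : (A ∩ Set.Iio N).Finite := (Set.finite_Iio N).inter_of_right A
    have hKle : K ≤ (A ∩ Set.Iio N).ncard := by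
      calc K = S.card := hcard.symm
      _ = (S : Set ℕ).ncard := (Set.ncard_coe_finset S).symm
      _ ≤ _ := Set.ncard_le_ncard hsub hfin
    have hN0 : (0 : ℝ) < N := by
      have : 0 < N := by omega
      exact_mod_cast this
    have hP0 : (0 : ℝ) < 2 * (P : ℝ) := by positivity
    rw [div_le_div_iff₀ (by exact_mod_cast hP0) hN0]
    have hN2PK : N ≤ 2 * (P * K) := by omega
    have h1 : (N : ℝ) ≤ 2 * (P * K) := by exact_mod_cast hN2PK
    have h2 : (K : ℝ) ≤ ((A ∩ Set.Iio N).ncard : ℝ) := by exact_mod_cast hKle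
    have hPr : (0 : ℝ) ≤ (P : ℝ) := by positivity
    nlinarith
  have hev : ∀ᶠ N in atTop,
      (1 : ℝ) / (2 * P) ≤ ((A ∩ Set.Iio N).ncard : ℝ) / N :=
    eventually_atTop.mpr ⟨2 * P, main⟩
  have hcb : IsCoboundedUnder (· ≥ ·) atTop
      (fun N : ℕ => ((A ∩ Set.Iio N).ncard : ℝ) / N) :=
    isCoboundedUnder_ge_of_eventually_le atTop (x := 1) <| by
      filter_upwards [eventually_ge_atTop 1] with N hN
      have hIio : (Set.Iio N : Set ℕ).ncard = N := by
        rw [← Finset.coe_Iio, Set.ncard_coe_finset, Nat.card_Iio]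
      have hle : (A ∩ Set.Iio N).ncard ≤ N :=
        le_trans (Set.ncard_le_ncard Set.inter_subset_right (Set.finite_Iio N)) hIio.le
      rw [div_le_one (by exact_mod_cast hN)]
      exact_mod_cast hle
  have := le_liminf_of_le hcb hev
  refine lt_of_lt_of_le ?_ this
  positivity
end

section
/- Assume Σ_{y ∈ S(x)} w(x,y) = 1 in 𝔽 for every x ∈ T. Then: (i) every function f : T_0 ∪ … ∪ T_N → E satisfying f(x) = Σ_{y ∈ S(x)} w(x,y) f(y) for all x ∈ T_0 ∪ … ∪ T_{N−1} extends to a generalized harmonic function F ∈ H(T,E) with F(y) = F(x) whenever y ∈ S(x) and x ∈ T_n with n ≥ N; and (ii) the set of f ∈ H(T,E) that are eventually locally constant in this sense (there exists N such that f(y) = f(x) for all y ∈ S(x), x ∈ T_n, n ≥ N) is dense in H(T,E). -/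
open MeasureTheory Filter Topology

/-!
A function on levels `0, …, N` that is harmonic below level `N` becomes harmonic
on the whole tree when it is copied unchanged from each vertex of level `≥ N` to its children,
since the weights at every vertex sum to `1`. Applied to the restriction of a harmonic `g` to
the first `N` levels, this gives an eventually locally constant harmonic function agreeing
with `g` on any prescribed finite set of vertices, i.e. lying in any basic neighbourhood of `g`
for the product topology.
-/

theorem dense_of_forall_exists_agree_on_finite {ι : Type*} {X : ι → Type*}
    [∀ i, TopologicalSpace (X i)] {A : Set (∀ i, X i)} {s : Set A}
    (h : ∀ a ∈ A, ∀ I : Set ι, I.Finite →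
      ∃ b ∈ s, ∀ i ∈ I, (b : ∀ i, X i) i = a i) :
    Dense s := by
  intro a
  rw [mem_closure_iff_nhds]
  intro U hU
  rw [nhds_subtype, mem_comap] at hU
  obtain ⟨V, hV, hVU⟩ := hU
  rw [nhds_pi, mem_pi] at hV
  obtain ⟨I, hI, t, ht, htV⟩ := hV
  obtain ⟨b, hbs, hba⟩ := h a a.2 I hI
  exact ⟨b, hVU (htV fun i hi => hba i hi ▸ mem_of_mem_nhds (ht i)), hbs⟩

namespace TreeData

variable (D : TreeData) {𝔽 E : Type}

def constExtension (N : ℕ) (f : ∀ n, D.T n → E) : ∀ n, D.T n → E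
  | 0 => f 0
  | n + 1 => fun y => if n + 1 ≤ N then f (n + 1) y else constExtension N f n (D.par n y)

variable {D}

lemma constExtension_of_le {N : ℕ} (f : ∀ n, D.T n → E) :
    ∀ {n}, n ≤ N → ∀ x : D.T n, D.constExtension N f n x = f n x
  | 0, _, _ => rfl
  | n + 1, h, x => by simp [constExtension, h]

lemma constExtension_succ {N n : ℕ} (f : ∀ n, D.T n → E) (h : N ≤ n) (y : D.T (n + 1)) :
    D.constExtension N f (n + 1) y = D.constExtension N f n (D.par n y) := by
  simp only [constExtension, if_neg (by omega : ¬ n + 1 ≤ N)]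

lemma harmonic_constExtension [Field 𝔽] [AddCommGroup E] [Module 𝔽 E]
    {w : ∀ n, D.T (n + 1) → 𝔽}
    (hw1 : ∀ n (x : D.T n), ∑ y : {y : D.T (n + 1) // D.par n y = x}, w n y.1 = 1)
    {N : ℕ} {f : ∀ n, D.T n → E}
    (hf : ∀ n, n < N → ∀ x : D.T n,
      f n x = ∑ y : {y : D.T (n + 1) // D.par n y = x}, w n y.1 • f (n + 1) y.1) :
    D.Harmonic w (fun v => D.constExtension N f v.1 v.2) := by
  intro n x
  dsimp only
  rcases lt_or_ge n N with hn | hn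
  · rw [constExtension_of_le f hn.le, hf n hn]
    exact Finset.sum_congr rfl fun y _ => by rw [constExtension_of_le f hn]
  · calc D.constExtension N f n x
        = (∑ y : {y : D.T (n + 1) // D.par n y = x}, w n y.1) • D.constExtension N f n x := by
          rw [hw1, one_smul]
      _ = ∑ y : {y : D.T (n + 1) // D.par n y = x},
            w n y.1 • D.constExtension N f (n + 1) y.1 := by
          rw [Finset.sum_smul]
          exact Finset.sum_congr rfl fun y _ => by rw [constExtension_succ f hn, y.2]

end TreeData

theorem locally_constant_extension_and_dense_general (D : TreeData)
    {𝔽 E : Type} [Field 𝔽]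
    [AddCommGroup E] [Module 𝔽 E] [MetricSpace E]
    (w : ∀ n, D.T (n + 1) → 𝔽)
    (hw1 : ∀ n (x : D.T n), ∑ y : {y : D.T (n + 1) // D.par n y = x}, w n y.1 = 1) :
    (∀ N : ℕ, ∀ f : ∀ n, D.T n → E,
      (∀ n, n < N → ∀ x : D.T n,
        f n x = ∑ y : {y : D.T (n + 1) // D.par n y = x}, w n y.1 • f (n + 1) y.1) →
      ∃ F : D.Vert → E, F ∈ D.harmonicSet E w ∧
        (∀ n, n ≤ N → ∀ x : D.T n, F ⟨n, x⟩ = f n x) ∧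
        (∀ n, N ≤ n → ∀ y : D.T (n + 1), F ⟨n + 1, y⟩ = F ⟨n, D.par n y⟩)) ∧
    Dense {g : ↥(D.harmonicSet E w) | ∃ N : ℕ, ∀ n, N ≤ n →
      ∀ y : D.T (n + 1),
        (g : ↥(D.harmonicSet E w)).1 ⟨n + 1, y⟩ = (g : ↥(D.harmonicSet E w)).1 ⟨n, D.par n y⟩} := by
  refine ⟨fun N f hf => ⟨fun v => D.constExtension N f v.1 v.2,
    TreeData.harmonic_constExtension hw1 hf, fun n hn => TreeData.constExtension_of_le f hn,
    fun n hn => TreeData.constExtension_succ f hn⟩, ?_⟩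
  refine dense_of_forall_exists_agree_on_finite fun g hg I hI => ?_
  obtain ⟨N, hN⟩ := (hI.image Sigma.fst).bddAbove
  let g' : ∀ n, D.T n → E := fun n x => g ⟨n, x⟩
  have hg' : ∀ n, n < N → ∀ x : D.T n,
      g' n x = ∑ y : {y : D.T (n + 1) // D.par n y = x}, w n y.1 • g' (n + 1) y.1 :=
    fun n _ => hg n
  exact ⟨⟨fun v => D.constExtension N g' v.1 v.2, TreeData.harmonic_constExtension hw1 hg'⟩,
    ⟨N, fun n hn => TreeData.constExtension_succ g' hn⟩,
    fun v hv => TreeData.constExtension_of_le g' (hN ⟨v, hv, rfl⟩) v.2⟩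

/-- Assume Σ_{y ∈ S(x)} w(x,y) = 1. Then (i) every f defined on levels
0,…,N and harmonic up to level N−1 extends to F ∈ H(T,E) with F constant along children
from level N on; and (ii) the set of eventually locally constant f ∈ H(T,E) is dense
in H(T,E). -/
theorem locally_constant_extension_and_dense (D : TreeData)
    {𝔽 E : Type} [Field 𝔽] [TopologicalSpace 𝔽] [T2Space 𝔽]
    [TopologicalSpace.SeparableSpace 𝔽] [ContinuousAdd 𝔽] [ContinuousInv₀ 𝔽]
    [AddCommGroup E] [Module 𝔽 E] [MetricSpace E]
    [TopologicalSpace.SeparableSpace E] [ContinuousAdd E] [ContinuousSMul 𝔽 E]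
    (w : ∀ n, D.T (n + 1) → 𝔽) (hw : ∀ n y, w n y ≠ 0)
    (hdist : ∀ a x y : E, dist (a + x) (a + y) = dist x y)
    (hw1 : ∀ n (x : D.T n), ∑ y : {y : D.T (n + 1) // D.par n y = x}, w n y.1 = 1) :
    (∀ N : ℕ, ∀ f : ∀ n, D.T n → E,
      (∀ n, n < N → ∀ x : D.T n,
        f n x = ∑ y : {y : D.T (n + 1) // D.par n y = x}, w n y.1 • f (n + 1) y.1) →
      ∃ F : D.Vert → E, F ∈ D.harmonicSet E w ∧
        (∀ n, n ≤ N → ∀ x : D.T n, F ⟨n, x⟩ = f n x) ∧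
        (∀ n, N ≤ n → ∀ y : D.T (n + 1), F ⟨n + 1, y⟩ = F ⟨n, D.par n y⟩)) ∧
    Dense {g : ↥(D.harmonicSet E w) | ∃ N : ℕ, ∀ n, N ≤ n →
      ∀ y : D.T (n + 1),
        (g : ↥(D.harmonicSet E w)).1 ⟨n + 1, y⟩ = (g : ↥(D.harmonicSet E w)).1 ⟨n, D.par n y⟩} :=
  locally_constant_extension_and_dense_general D w hw1
end
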